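/- (Theorem 3.5, direction 1.) Assume V : ℝ^d → ℝ is three times continuously differentiable and Lipschitz continuous, its Hessian is uniformly bounded, the set of non-degenerate index-1 saddle points of V is nonempty and finite, and all stationary points of V are non-degenerate. Assume d(·,·) : ℝ^d × ℝ^d → ℝ satisfies: (a) for each x, y ↦ d(x,y) is convex and C², with ∇²_y d(x,y) = 0 iff y = x; (b) d(x,y) ≥ 0 with equality iff x = y; (c) for every ε > 0 there is λ̄_ε > 0 such that (∇²_y d(x,y))(v,v) ≥ λ̄_ε·‖v‖² whenever ‖x−y‖ ≥ ε. Let α, β ∈ ℝ with α + β > 1 and define W̃_ρ(y; x, u) := (1−α)·V(y) + α·V(y − ⟨u, y−x⟩·u) − β·V(x + ⟨u, y−x⟩·u) + ρ·d(x,y). Then there exists ρ̄ > 0 such that for all ρ > ρ̄: if x* satisfies ∇V(x*) = 0 and λ₁(x*) < 0 < λ₂(x*), and u is a unit eigenvector of ∇²V(x*) for λ₁(x*), then the triple (x*, x*, u) is a Nash equilibrium of the three-player game G₃, namely: (i) W̃_ρ(x*; x*, u) ≤ W̃_ρ(y; x*, u) for all y ∈ ℝ^d; (ii) ½‖x* −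 x*‖² ≤ ½‖x − x*‖² for all x ∈ ℝ^d; (iii) uᵀ(∇²V(x*))u ≤ vᵀ(∇²V(x*))v for all unit vectors v ∈ ℝ^d. -/

import Mathlib

open scoped RealInnerProductSpace

/-- The Hessian of `V` at `x`, as the (continuous linear) derivative of the gradient. -/
noncomputable def hess {n : ℕ} (V : EuclideanSpace ℝ (Fin n) → ℝ)
    (x : EuclideanSpace ℝ (Fin n)) :
    EuclideanSpace ℝ (Fin n) →L[ℝ] EuclideanSpace ℝ (Fin n) :=
  fderiv ℝ (gradient V) x

/-- The penalized auxiliary function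
`W̃_ρ(y; x, u) = (1-α)V(y) + αV(y - ⟨u,y-x⟩u) - βV(x + ⟨u,y-x⟩u) + ρ·d(x,y)`. -/
noncomputable def Wtilde {n : ℕ} (V : EuclideanSpace ℝ (Fin n) → ℝ)
    (p : EuclideanSpace ℝ (Fin n) → EuclideanSpace ℝ (Fin n) → ℝ)
    (α β ρ : ℝ) (x u y : EuclideanSpace ℝ (Fin n)) : ℝ :=
  (1 - α) * V y + α * V (y - ⟪u, y - x⟫ • u) - β * V (x + ⟪u, y - x⟫ • u) + ρ * p x y

/-- The index-1 region `Ω₁ = {x : λ₁(x) < 0 < λ₂(x)}`, where `lam i x` is the `i`-th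
(ascending) eigenvalue of the Hessian of `V` at `x`. -/
def Omega1 {n : ℕ} (hn : 2 ≤ n) (lam : Fin n → EuclideanSpace ℝ (Fin n) → ℝ) :
    Set (EuclideanSpace ℝ (Fin n)) :=
  {x | lam ⟨0, by omega⟩ x < 0 ∧ 0 < lam ⟨1, by omega⟩ x}

section helpers

theorem hess_inner_eq {n : ℕ} {V : EuclideanSpace ℝ (Fin n) → ℝ}
    (x a b : EuclideanSpace ℝ (Fin n)) :
    fderiv ℝ (fderiv ℝ V) x a b = ⟪hess V x a, b⟫ := by
  have h1 : gradient V = fun y =>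
      (InnerProductSpace.toDual ℝ (EuclideanSpace ℝ (Fin n))).symm (fderiv ℝ V y) := rfl
  have h2 : hess V x = ((InnerProductSpace.toDual ℝ (EuclideanSpace ℝ (Fin n))).symm.toContinuousLinearEquiv :
      _ ≃L[ℝ] _).toContinuousLinearMap.comp (fderiv ℝ (fderiv ℝ V) x) := by
    rw [hess, h1]
    exact (InnerProductSpace.toDual ℝ
      (EuclideanSpace ℝ (Fin n))).symm.toContinuousLinearEquiv.comp_fderiv
  rw [h2]
  simp [InnerProductSpace.toDual_symm_apply]

theorem fderiv_eq_zero_of_gradient_eq_zero {n : ℕ} {V : EuclideanSpace ℝ (Fin n) → ℝ}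
    {x : EuclideanSpace ℝ (Fin n)} (h : gradient V x = 0) : fderiv ℝ V x = 0 := by
  have h1 : gradient V x
      = (InnerProductSpace.toDual ℝ (EuclideanSpace ℝ (Fin n))).symm (fderiv ℝ V x) := rfl
  rw [h1] at h
  have := congrArg (InnerProductSpace.toDual ℝ (EuclideanSpace ℝ (Fin n))) h
  simpa using this

theorem line_hasDerivAt {n : ℕ} {f : EuclideanSpace ℝ (Fin n) → ℝ}
    (hf : Differentiable ℝ f) (x a : EuclideanSpace ℝ (Fin n)) (s : ℝ) :
    HasDerivAt (fun t : ℝ => f (x + t • a)) (fderiv ℝ f (x + s • a) a) s := by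
  have hl : HasDerivAt (fun t : ℝ => x + t • a) a s := by
    simpa using ((hasDerivAt_id s).smul_const a).const_add x
  exact (hf.differentiableAt.hasFDerivAt).comp_hasDerivAt s hl

theorem line_hasDerivAt2 {n : ℕ} {f : EuclideanSpace ℝ (Fin n) → ℝ}
    (hf : Differentiable ℝ (fderiv ℝ f)) (x a : EuclideanSpace ℝ (Fin n)) (s : ℝ) :
    HasDerivAt (fun t : ℝ => fderiv ℝ f (x + t • a) a)
      (fderiv ℝ (fderiv ℝ f) (x + s • a) a a) s := by
  have hl : HasDerivAt (fun t : ℝ => x + t • a) a s := by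
    simpa using ((hasDerivAt_id s).smul_const a).const_add x
  have h1 : HasDerivAt (fun t : ℝ => fderiv ℝ f (x + t • a))
      (fderiv ℝ (fderiv ℝ f) (x + s • a) a) s :=
    (hf.differentiableAt.hasFDerivAt).comp_hasDerivAt s hl
  simpa using h1.clm_apply (hasDerivAt_const s a)

theorem growth1D {f f' f'' : ℝ → ℝ} {T μ : ℝ}
    (hd1 : ∀ s, HasDerivAt f (f' s) s) (hd2 : ∀ s, HasDerivAt f' (f'' s) s)
    (h0 : 0 ≤ f' 0) (hμ : ∀ s ∈ Set.Icc (0:ℝ) T, μ ≤ f'' s)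
    {t : ℝ} (ht : t ∈ Set.Icc (0:ℝ) T) :
    f 0 + μ / 2 * t ^ 2 ≤ f t := by
  set G : ℝ → ℝ := fun s => f' s - μ * s with hG
  have hdG : ∀ s, HasDerivAt G (f'' s - μ) s := fun s => by
    have h := (hd2 s).sub ((hasDerivAt_id s).const_mul μ)
    simp only [mul_one] at h
    exact h
  have hGmono : MonotoneOn G (Set.Icc 0 T) := by
    apply monotoneOn_of_deriv_nonneg (convex_Icc 0 T)
    · exact fun s _ => (hdG s).continuousAt.continuousWithinAt
    · exact fun s _ => (hdG s).differentiableAt.differentiableWithinAt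
    · intro s hs
      rw [interior_Icc] at hs
      rw [(hdG s).deriv]
      have := hμ s ⟨le_of_lt hs.1, le_of_lt hs.2⟩
      linarith
  have hGnn : ∀ s ∈ Set.Icc (0:ℝ) T, 0 ≤ G s := by
    intro s hs
    have h0T : (0:ℝ) ∈ Set.Icc (0:ℝ) T := ⟨le_refl _, le_trans hs.1 hs.2⟩
    have := hGmono h0T hs hs.1
    have hG0 : G 0 = f' 0 := by simp [hG]
    linarith [h0]
  set F : ℝ → ℝ := fun s => f s - μ / 2 * s ^ 2 with hF
  have hdF : ∀ s, HasDerivAt F (G s) s := fun s => by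
    have h2' : HasDerivAt (fun s : ℝ => s ^ 2) (2 * s) s := by
      simpa using hasDerivAt_pow 2 s
    have h2 : HasDerivAt (fun s : ℝ => μ / 2 * s ^ 2) (μ / 2 * (2 * s)) s :=
      h2'.const_mul (μ / 2)
    have h3 : HasDerivAt F (f' s - μ / 2 * (2 * s)) s := (hd1 s).sub h2
    convert h3 using 1
    simp only [hG]; ring
  have hFmono : MonotoneOn F (Set.Icc 0 T) := by
    apply monotoneOn_of_deriv_nonneg (convex_Icc 0 T)
    · exact fun s _ => (hdF s).continuousAt.continuousWithinAt
    · exact fun s _ => (hdF s).differentiableAt.differentiableWithinAt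
    · intro s hs
      rw [interior_Icc] at hs
      rw [(hdF s).deriv]
      exact hGnn s ⟨le_of_lt hs.1, le_of_lt hs.2⟩
  have h0T : (0:ℝ) ∈ Set.Icc (0:ℝ) T := ⟨le_refl _, le_trans ht.1 ht.2⟩
  have := hFmono h0T ht ht.1
  simp only [hF] at this
  nlinarith [this]

theorem mul_ge_neg_abs {x δ y : ℝ} (h : |x| ≤ δ) : -(|y| * δ) ≤ y * x := by
  have h1 : |y * x| ≤ |y| * δ := by
    rw [abs_mul]
    exact mul_le_mul_of_nonneg_left h (abs_nonneg y)
  have := neg_abs_le (y * x)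
  linarith

theorem eigen_stuff {n : ℕ} (hn : 2 ≤ n)
    {H : EuclideanSpace ℝ (Fin n) →L[ℝ] EuclideanSpace ℝ (Fin n)}
    {lam : Fin n → ℝ} (hmono : Monotone lam)
    {w : Fin n → EuclideanSpace ℝ (Fin n)} (hw : Orthonormal ℝ w)
    (heig : ∀ i, H (w i) = lam i • w i)
    {u : EuclideanSpace ℝ (Fin n)} (hu : ‖u‖ = 1)
    (hequ : H u = lam ⟨0, by omega⟩ • u)
    (hneg : lam ⟨0, by omega⟩ < 0) (hpos : 0 < lam ⟨1, by omega⟩) :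
    (∀ v, lam ⟨0, by omega⟩ * ‖v‖ ^ 2 ≤ ⟪H v, v⟫) ∧
    (∀ α β : ℝ, 1 < α + β → ∀ z : EuclideanSpace ℝ (Fin n), ‖z‖ = 1 →
      min ((1 - α - β) * lam ⟨0, by omega⟩) (lam ⟨1, by omega⟩) ≤
        (1 - α) * ⟪H z, z⟫ + α * ⟪H (z - ⟪u, z⟫ • u), z - ⟪u, z⟫ • u⟫
          - β * ⟪u, z⟫ ^ 2 * lam ⟨0, by omega⟩) := by
  set i0 : Fin n := ⟨0, by omega⟩ with hi0
  set i1 : Fin n := ⟨1, by omega⟩ with hi1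
  haveI : Nonempty (Fin n) := ⟨i0⟩
  have hcard : Fintype.card (Fin n) = Module.finrank ℝ (EuclideanSpace ℝ (Fin n)) := by
    simp [finrank_euclideanSpace]
  let b := basisOfLinearIndependentOfCardEqFinrank hw.linearIndependent hcard
  have hbw : ⇑b = w := coe_basisOfLinearIndependentOfCardEqFinrank _ _
  let ob : OrthonormalBasis (Fin n) ℝ (EuclideanSpace ℝ (Fin n)) :=
    b.toOrthonormalBasis (by rwa [hbw])
  have hob : ∀ i, ob i = w i := by
    intro i
    simp only [ob, Module.Basis.coe_toOrthonormalBasis, hbw]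
  have hexp : ∀ v : EuclideanSpace ℝ (Fin n), v = ∑ i, ⟪w i, v⟫ • w i := by
    intro v
    conv_lhs => rw [← ob.sum_repr' v]
    exact Finset.sum_congr rfl fun i _ => by rw [hob]
  have quad : ∀ v : EuclideanSpace ℝ (Fin n), ⟪H v, v⟫ = ∑ i, lam i * ⟪w i, v⟫ ^ 2 := by
    intro v
    have hHv : H v = ∑ i, (⟪w i, v⟫ * lam i) • w i := by
      conv_lhs => rw [hexp v]
      rw [map_sum]
      exact Finset.sum_congr rfl fun i _ => by
        rw [ContinuousLinearMap.map_smul, heig, smul_smul]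
    rw [hHv, sum_inner]
    exact Finset.sum_congr rfl fun i _ => by
      rw [real_inner_smul_left]; ring
  have coords : ∀ v : EuclideanSpace ℝ (Fin n), ∑ i, ⟪w i, v⟫ ^ 2 = ‖v‖ ^ 2 := by
    intro v
    have := ob.sum_inner_mul_inner v v
    rw [real_inner_self_eq_norm_sq] at this
    rw [← this]
    exact Finset.sum_congr rfl fun i _ => by
      rw [hob, real_inner_comm v (w i)]; ring
  set a : Fin n → ℝ := fun i => ⟪w i, u⟫ with ha
  have ha0 : ∀ i, i ≠ i0 → a i = 0 := by
    intro i hi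
    have h1 : ⟪w i, H u⟫ = lam i0 * a i := by
      rw [hequ, real_inner_smul_right]
    have hHu : H u = ∑ j, (a j * lam j) • w j := by
      conv_lhs => rw [hexp u]
      rw [map_sum]
      exact Finset.sum_congr rfl fun j _ => by
        rw [ContinuousLinearMap.map_smul, heig, smul_smul]
    have h2 : ⟪w i, H u⟫ = a i * lam i := by
      rw [hHu]
      exact hw.inner_right_fintype (fun j => a j * lam j) i
    have hlt : lam i0 < lam i := by
      have hle : i1 ≤ i := by
        rw [Fin.le_def]
        simp only [hi1]
        have : i.val ≠ 0 := fun h => hi (Fin.ext (by simp [h, hi0]))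
        omega
      have := hmono hle
      linarith
    have : (lam i - lam i0) * a i = 0 := by nlinarith [h1, h2]
    rcases mul_eq_zero.1 this with h | h
    · exfalso; linarith
    · exact h
  have hasum : ∀ i, i ∈ Finset.univ.erase i0 → a i ^ 2 = 0 := fun i hi => by
    rw [ha0 i (Finset.mem_erase.1 hi).1]; ring
  have ha1 : a i0 ^ 2 = 1 := by
    have h1 : ∑ i, a i ^ 2 = 1 := by rw [coords u, hu]; norm_num
    rw [← Finset.add_sum_erase _ (fun i => a i ^ 2) (Finset.mem_univ i0),
      Finset.sum_eq_zero hasum] at h1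
    linarith
  constructor
  · intro v
    rw [quad v, ← coords v, Finset.mul_sum]
    apply Finset.sum_le_sum
    intro i _
    have hle : lam i0 ≤ lam i := hmono (by rw [Fin.le_def]; simp [hi0])
    exact mul_le_mul_of_nonneg_right hle (sq_nonneg _)
  · intro α β hab z hz
    set c : Fin n → ℝ := fun i => ⟪w i, z⟫ with hc
    have hcz : ⟪u, z⟫ = a i0 * c i0 := by
      have h1 := ob.sum_inner_mul_inner u z
      rw [← h1]
      rw [← Finset.add_sum_erase _ (fun i => ⟪u, ob i⟫ * ⟪ob i, z⟫) (Finset.mem_univ i0),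
        Finset.sum_eq_zero (fun i hi => by
          rw [hob, real_inner_comm (w i) u]
          have h0 : (⟪w i, u⟫ : ℝ) = 0 := ha0 i (Finset.mem_erase.1 hi).1
          rw [h0, zero_mul])]
      rw [hob, real_inner_comm (w i0) u, add_zero]
    set z1 : EuclideanSpace ℝ (Fin n) := z - ⟪u, z⟫ • u with hz1def
    have hz1c : ∀ i, i ∈ Finset.univ.erase i0 → ⟪w i, z1⟫ = c i := by
      intro i hi
      rw [hz1def, inner_sub_right, real_inner_smul_right]
      have h0 : (⟪w i, u⟫ : ℝ) = 0 := ha0 i (Finset.mem_erase.1 hi).1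
      rw [h0, mul_zero, sub_zero]
    have hz1c0 : ⟪w i0, z1⟫ = 0 := by
      rw [hz1def, inner_sub_right, real_inner_smul_right, hcz]
      show c i0 - a i0 * c i0 * a i0 = 0
      linear_combination (-(c i0)) * ha1
    set S : ℝ := ∑ i ∈ Finset.univ.erase i0, lam i * c i ^ 2 with hS
    set S' : ℝ := ∑ i ∈ Finset.univ.erase i0, c i ^ 2 with hS'
    have e1 : ⟪H z, z⟫ = lam i0 * c i0 ^ 2 + S := by
      rw [quad z, ← Finset.add_sum_erase _ (fun i => lam i * c i ^ 2) (Finset.mem_univ i0)]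
    have e2 : ⟪H z1, z1⟫ = S := by
      rw [quad z1, ← Finset.add_sum_erase _ (fun i => lam i * ⟪w i, z1⟫ ^ 2)
        (Finset.mem_univ i0), hz1c0]
      rw [hS]
      have : ∑ i ∈ Finset.univ.erase i0, lam i * ⟪w i, z1⟫ ^ 2
          = ∑ i ∈ Finset.univ.erase i0, lam i * c i ^ 2 :=
        Finset.sum_congr rfl fun i hi => by rw [hz1c i hi]
      rw [this]; ring
    have e3 : c i0 ^ 2 + S' = 1 := by
      have h1 : ∑ i, c i ^ 2 = 1 := by rw [coords z, hz]; norm_num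
      rw [← Finset.add_sum_erase _ (fun i => c i ^ 2) (Finset.mem_univ i0)] at h1
      exact h1
    have hS'nn : 0 ≤ S' := Finset.sum_nonneg fun i _ => sq_nonneg _
    have hSS' : lam i1 * S' ≤ S := by
      rw [hS, hS', Finset.mul_sum]
      apply Finset.sum_le_sum
      intro i hi
      have hle : lam i1 ≤ lam i := by
        apply hmono
        rw [Fin.le_def]
        simp only [hi1]
        have : i.val ≠ 0 := fun h => (Finset.mem_erase.1 hi).1 (Fin.ext (by simp [h, hi0]))
        omega
      exact mul_le_mul_of_nonneg_right hle (sq_nonneg _)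
    set m : ℝ := min ((1 - α - β) * lam i0) (lam i1) with hm
    have key : m ≤ (1 - α - β) * lam i0 * c i0 ^ 2 + S := by
      have k1 : m * c i0 ^ 2 ≤ (1 - α - β) * lam i0 * c i0 ^ 2 :=
        mul_le_mul_of_nonneg_right (min_le_left _ _) (sq_nonneg _)
      have k2 : m * S' ≤ lam i1 * S' :=
        mul_le_mul_of_nonneg_right (min_le_right _ _) hS'nn
      have hme : m * c i0 ^ 2 + m * S' = m := by rw [← mul_add, e3, mul_one]
      linarith [k1, k2, hSS', hme]
    rw [e1, e2, hcz]
    refine le_trans key (le_of_eq ?_)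
    have e4 : (a i0 * c i0) ^ 2 = c i0 ^ 2 := by
      rw [mul_pow, ha1, one_mul]
    rw [e4]; ring

end helpers

set_option maxHeartbeats 2000000 in
/-- Theorem 3.5, direction 1: under the assumptions on `V` and the penalty
`p`, with `α + β > 1`, there is `ρ̄ > 0` such that for all `ρ > ρ̄`: if `x*` is a
non-degenerate index-1 saddle point (`∇V(x*) = 0`, `λ₁(x*) < 0 < λ₂(x*)`) and `u` is a unit
eigenvector of `∇²V(x*)` for `λ₁(x*)`, then `(x*, x*, u)` is a Nash equilibrium of the
3-player game `G₃`: (i) `x*` minimizes `y ↦ W̃_ρ(y; x*, u)`; (ii) `x*` minimizes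
`x ↦ ½‖x - x*‖²`; (iii) `u` minimizes `v ↦ vᵀ(∇²V(x*))v` over unit vectors. -/
theorem stmt_16 {n : ℕ} (hn : 2 ≤ n)
    (V : EuclideanSpace ℝ (Fin n) → ℝ)
    (hV : ContDiff ℝ 3 V)
    (hVLip : ∃ L : ℝ, ∀ a b : EuclideanSpace ℝ (Fin n), |V a - V b| ≤ L * ‖a - b‖)
    (lamL lamU : ℝ)
    (hHessBdd : ∀ x v : EuclideanSpace ℝ (Fin n),
      lamL * ‖v‖ ^ 2 ≤ ⟪hess V x v, v⟫ ∧ ⟪hess V x v, v⟫ ≤ lamU * ‖v‖ ^ 2)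
    (lam : Fin n → EuclideanSpace ℝ (Fin n) → ℝ)
    (hlamMono : ∀ x : EuclideanSpace ℝ (Fin n), Monotone fun i => lam i x)
    (hlamEig : ∀ x : EuclideanSpace ℝ (Fin n), ∃ w : Fin n → EuclideanSpace ℝ (Fin n),
      Orthonormal ℝ w ∧ ∀ i, hess V x (w i) = lam i x • w i)
    (hS1ne : {x | gradient V x = 0 ∧ x ∈ Omega1 hn lam}.Nonempty)
    (hS1fin : {x | gradient V x = 0 ∧ x ∈ Omega1 hn lam}.Finite)
    (hnondeg : ∀ x : EuclideanSpace ℝ (Fin n), gradient V x = 0 → ∀ i, lam i x ≠ 0)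
    (p : EuclideanSpace ℝ (Fin n) → EuclideanSpace ℝ (Fin n) → ℝ)
    (hpConv : ∀ x, ConvexOn ℝ Set.univ (p x))
    (hpC2 : ∀ x, ContDiff ℝ 2 (p x))
    (hpHess0 : ∀ x y, iteratedFDeriv ℝ 2 (p x) y = 0 ↔ y = x)
    (hpNonneg : ∀ x y, 0 ≤ p x y)
    (hpZero : ∀ x y, p x y = 0 ↔ x = y)
    (hpStrong : ∀ ε : ℝ, 0 < ε → ∃ lamε : ℝ, 0 < lamε ∧
      ∀ x y : EuclideanSpace ℝ (Fin n), ε ≤ ‖x - y‖ →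
        ∀ v, lamε * ‖v‖ ^ 2 ≤ iteratedFDeriv ℝ 2 (p x) y ![v, v])
    (α β : ℝ) (hab : α + β > 1) :
    ∃ ρbar : ℝ, 0 < ρbar ∧ ∀ ρ : ℝ, ρ > ρbar →
      ∀ xstar : EuclideanSpace ℝ (Fin n), gradient V xstar = 0 →
        lam ⟨0, by omega⟩ xstar < 0 → 0 < lam ⟨1, by omega⟩ xstar →
        ∀ u : EuclideanSpace ℝ (Fin n),
          ‖u‖ = 1 → hess V xstar u = lam ⟨0, by omega⟩ xstar • u →
          (∀ y, Wtilde V p α β ρ xstar u xstar ≤ Wtilde V p α β ρ xstar u y) ∧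
          (∀ x : EuclideanSpace ℝ (Fin n),
            (1 / 2) * ‖xstar - xstar‖ ^ 2 ≤ (1 / 2) * ‖x - xstar‖ ^ 2) ∧
          (∀ v : EuclideanSpace ℝ (Fin n), ‖v‖ = 1 →
            ⟪hess V xstar u, u⟫ ≤ ⟪hess V xstar v, v⟫) := by
  classical
  obtain ⟨L, hL⟩ := hVLip
  -- L is nonnegative
  have hL0 : 0 ≤ L := by
    have h1 := hL (EuclideanSpace.single (⟨0, by omega⟩ : Fin n) (1:ℝ)) 0
    rw [sub_zero, EuclideanSpace.norm_single] at h1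
    have h2 := abs_nonneg (V (EuclideanSpace.single (⟨0, by omega⟩ : Fin n) (1:ℝ)) - V 0)
    simp only [norm_one, mul_one] at h1
    linarith
  set CL : ℝ := (|1 - α| + |α| + |β|) * L + 1 with hCLdef
  have hCL0 : 0 < CL := by positivity
  set K : ℝ := |1 - α| + |α| + |β| + 1 with hKdef
  have hK0 : 0 < K := by positivity
  -- differentiability facts
  have hVd : Differentiable ℝ V := hV.differentiable (by norm_num)
  have hV2 : ContDiff ℝ 2 (fderiv ℝ V) := hV.fderiv_right (m := 2) (by norm_num)
  have hVd1 : Differentiable ℝ (fderiv ℝ V) := hV2.differentiable (by norm_num)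
  have hBcont : Continuous (fun z => fderiv ℝ (fderiv ℝ V) z) :=
    (hV2.fderiv_right (m := 1) (by norm_num)).continuous
  set mfun : EuclideanSpace ℝ (Fin n) → ℝ :=
    fun x => min ((1 - α - β) * lam ⟨0, by omega⟩ x) (lam ⟨1, by omega⟩ x) with hmfundef
  set Fset := hS1fin.toFinset with hFsetdef
  have hFne : Fset.Nonempty := by
    obtain ⟨x0, hx0⟩ := hS1ne
    exact ⟨x0, (Set.Finite.mem_toFinset _).2 hx0⟩
  -- for every saddle point, the second derivative is uniformly close to its value at the point
  -- on a small ball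
  have hex : ∀ x ∈ Fset, ∃ r : ℝ, 0 < r ∧ ∀ z,
      dist z x ≤ r → ‖fderiv ℝ (fderiv ℝ V) z - fderiv ℝ (fderiv ℝ V) x‖ ≤ mfun x / (2*K) := by
    intro x hx
    have hxS := (Set.Finite.mem_toFinset _).1 hx
    have hneg : lam ⟨0, by omega⟩ x < 0 := hxS.2.1
    have hpos : 0 < lam ⟨1, by omega⟩ x := hxS.2.2
    have hm : 0 < mfun x := by
      apply lt_min
      · exact mul_pos_of_neg_of_neg (by linarith) hneg
      · exact hpos
    have hc := hBcont.continuousAt (x := x)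
    replace hc := (Metric.continuousAt_iff (α := EuclideanSpace ℝ (Fin n))
      (β := EuclideanSpace ℝ (Fin n) →L[ℝ] EuclideanSpace ℝ (Fin n) →L[ℝ] ℝ)).1 hc
    obtain ⟨δ, hδ, hδ'⟩ := hc (mfun x / (2*K)) (by positivity)
    refine ⟨δ/2, by positivity, fun z hz => ?_⟩
    have h1 := hδ' (show dist z x < δ by linarith)
    exact ((dist_eq_norm (fderiv ℝ (fderiv ℝ V) z) (fderiv ℝ (fderiv ℝ V) x)).symm.le).trans
      (by exact h1.le)
  choose! rfun hrpos hrspec using hex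
  set rmin : ℝ := Fset.inf' hFne rfun with hrmindef
  have hrmin_pos : 0 < rmin := (Finset.lt_inf'_iff hFne).2 fun x hx => hrpos x hx
  obtain ⟨lb, hlb_pos, hlb⟩ := hpStrong (rmin/2) (by positivity)
  refine ⟨8 * CL / (lb * rmin) + 1, by positivity, ?_⟩
  intro ρ hρ xstar hgrad hneg hpos u hu hequ
  have hρ0 : 0 < ρ := lt_trans (by positivity) hρ
  have hmemS : xstar ∈ {x | gradient V x = 0 ∧ x ∈ Omega1 hn lam} := ⟨hgrad, hneg, hpos⟩
  have hmem : xstar ∈ Fset := (Set.Finite.mem_toFinset _).2 hmemS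
  have hrle : rmin ≤ rfun xstar := Finset.inf'_le _ hmem
  have hrxpos : 0 < rfun xstar := hrpos xstar hmem
  have hrx := hrspec xstar hmem
  have hmpos : 0 < mfun xstar := by
    apply lt_min
    · exact mul_pos_of_neg_of_neg (by linarith) hneg
    · exact hpos
  obtain ⟨w, hw, heig⟩ := hlamEig xstar
  obtain ⟨D1, D2⟩ := eigen_stuff hn (hlamMono xstar) hw heig hu hequ hneg hpos
  refine ⟨?_, ?_, ?_⟩
  · -- part (i)
    intro y
    rcases eq_or_ne y xstar with rfl | hyne
    · exact le_refl _
    set t : ℝ := ‖y - xstar‖ with htdef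
    have ht : 0 < t := by
      rw [htdef]
      exact norm_pos_iff.2 (sub_ne_zero.2 hyne)
    set w0 : EuclideanSpace ℝ (Fin n) := t⁻¹ • (y - xstar) with hw0def
    have hw0 : ‖w0‖ = 1 := by
      rw [hw0def, norm_smul, norm_inv, Real.norm_eq_abs, abs_of_pos ht, ← htdef]
      field_simp
    have hy : y = xstar + t • w0 := by
      rw [hw0def, smul_smul, mul_inv_cancel₀ (ne_of_gt ht), one_smul]
      abel
    have hyx : y - xstar = t • w0 := by rw [hy]; abel
    set cc : ℝ := ⟪u, w0⟫ with hccdef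
    have hcc1 : |cc| ≤ 1 := by
      have h1 := abs_real_inner_le_norm u w0
      rw [hu, hw0, one_mul] at h1
      exact h1
    set w1 : EuclideanSpace ℝ (Fin n) := w0 - cc • u with hw1def
    have hw1sq : ‖w1‖ ^ 2 = 1 - cc ^ 2 := by
      have h1 : ⟪w1, w1⟫ = ‖w0‖ ^ 2 - 2 * cc * ⟪u, w0⟫ + cc ^ 2 * ‖u‖ ^ 2 := by
        simp only [hw1def, inner_sub_left, inner_sub_right, real_inner_smul_left,
          real_inner_smul_right, real_inner_self_eq_norm_sq, norm_smul,
          Real.norm_eq_abs, mul_pow, sq_abs]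
        rw [real_inner_comm w0 u]
        ring
      rw [← real_inner_self_eq_norm_sq, h1, hu, hw0, ← hccdef]
      ring
    have hw1norm : ‖w1‖ ≤ 1 := by
      nlinarith [hw1sq, sq_nonneg cc, norm_nonneg w1]
    have hcu : ‖cc • u‖ ≤ 1 := by
      rw [norm_smul, hu, mul_one, Real.norm_eq_abs]
      exact hcc1
    -- the three-term function along the ray
    set Ψ : ℝ → ℝ := fun s => (1 - α) * V (xstar + s • w0) + α * V (xstar + s • w1)
      - β * V (xstar + s • (cc • u)) with hΨdef
    set Ψ' : ℝ → ℝ := fun s => (1 - α) * (fderiv ℝ V (xstar + s • w0) w0)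
      + α * (fderiv ℝ V (xstar + s • w1) w1)
      - β * (fderiv ℝ V (xstar + s • (cc • u)) (cc • u)) with hΨ'def
    set Ψ'' : ℝ → ℝ := fun s => (1 - α) * (fderiv ℝ (fderiv ℝ V) (xstar + s • w0) w0 w0)
      + α * (fderiv ℝ (fderiv ℝ V) (xstar + s • w1) w1 w1)
      - β * (fderiv ℝ (fderiv ℝ V) (xstar + s • (cc • u)) (cc • u) (cc • u)) with hΨ''def
    have hdΨ : ∀ s, HasDerivAt Ψ (Ψ' s) s := fun s =>
      (((line_hasDerivAt hVd xstar w0 s).const_mul (1 - α)).add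
        ((line_hasDerivAt hVd xstar w1 s).const_mul α)).sub
        ((line_hasDerivAt hVd xstar (cc • u) s).const_mul β)
    have hdΨ' : ∀ s, HasDerivAt Ψ' (Ψ'' s) s := fun s =>
      (((line_hasDerivAt2 hVd1 xstar w0 s).const_mul (1 - α)).add
        ((line_hasDerivAt2 hVd1 xstar w1 s).const_mul α)).sub
        ((line_hasDerivAt2 hVd1 xstar (cc • u) s).const_mul β)
    have hΨ'0 : Ψ' 0 = 0 := by
      have h0 : fderiv ℝ V xstar = 0 := fderiv_eq_zero_of_gradient_eq_zero hgrad
      simp [hΨ'def, h0]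
    -- Wtilde along the ray
    have hWt : Wtilde V p α β ρ xstar u y = Ψ t + ρ * p xstar y := by
      have e_inner : ⟪u, y - xstar⟫ = t * cc := by
        rw [hyx, real_inner_smul_right, hccdef]
      rw [Wtilde, e_inner]
      have e_b : y - (t * cc) • u = xstar + t • w1 := by
        rw [hy, hw1def]; module
      have e_c : xstar + (t * cc) • u = xstar + t • (cc • u) := by module
      rw [e_b, e_c]
      simp only [hΨdef, ← hy]
    have hW0 : Wtilde V p α β ρ xstar u xstar = Ψ 0 := by
      rw [Wtilde]
      have hp0 : p xstar xstar = 0 := (hpZero xstar xstar).2 rfl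
      simp [hΨdef, hp0]
    -- the penalty along the ray
    set hh : ℝ → ℝ := fun s => p xstar (xstar + s • w0) with hhdef
    have hpd : Differentiable ℝ (p xstar) := (hpC2 xstar).differentiable (by norm_num)
    have hpd1 : Differentiable ℝ (fderiv ℝ (p xstar)) :=
      ((hpC2 xstar).fderiv_right (m := 1) (by norm_num)).differentiable (by norm_num)
    set hh' : ℝ → ℝ := fun s => fderiv ℝ (p xstar) (xstar + s • w0) w0 with hh'def
    set hh'' : ℝ → ℝ := fun s => fderiv ℝ (fderiv ℝ (p xstar)) (xstar + s • w0) w0 w0 with hh''def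
    have hdh : ∀ s, HasDerivAt hh (hh' s) s := fun s => line_hasDerivAt hpd xstar w0 s
    have hdh' : ∀ s, HasDerivAt hh' (hh'' s) s := fun s => line_hasDerivAt2 hpd1 xstar w0 s
    have hhnn : ∀ s, 0 ≤ hh s := fun s => hpNonneg _ _
    have hh0 : hh 0 = 0 := by
      have : xstar + (0:ℝ) • w0 = xstar := by simp
      rw [hhdef]; simp only [this]
      exact (hpZero xstar xstar).2 rfl
    have hhconv : ConvexOn ℝ Set.univ hh := by
      have h1 := (hpConv xstar).comp_affineMap (AffineMap.lineMap xstar (xstar + w0))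
      have h2 : (p xstar) ∘ (AffineMap.lineMap xstar (xstar + w0)) = hh := by
        funext s
        simp only [Function.comp_apply, AffineMap.lineMap_apply_module, hhdef]
        congr 1
        module
      rw [h2] at h1
      simpa using h1
    have hstrong : ∀ s : ℝ, rmin/2 ≤ s → lb ≤ hh'' s := by
      intro s hs
      have hs0 : 0 ≤ s := le_trans (by positivity) hs
      have hnorm : rmin/2 ≤ ‖xstar - (xstar + s • w0)‖ := by
        have e : xstar - (xstar + s • w0) = -(s • w0) := by abel
        rw [e, norm_neg, norm_smul, hw0, mul_one, Real.norm_eq_abs, abs_of_nonneg hs0]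
        exact hs
      have h1 := hlb xstar (xstar + s • w0) hnorm w0
      rw [iteratedFDeriv_two_apply] at h1
      simp only [Matrix.cons_val_zero, Matrix.cons_val_one, Matrix.head_cons, hw0] at h1
      rw [hh''def]
      simpa using h1
    have hslope : 0 ≤ hh' (rmin/2) := by
      have hd := (hdh (rmin/2)).deriv
      have h1 := hhconv.slope_le_deriv (Set.mem_univ 0) (Set.mem_univ (rmin/2))
        (by positivity) (hdh (rmin/2)).differentiableAt
      rw [slope_def_field, hd] at h1
      have h2 : (hh (rmin/2) - hh 0) / (rmin/2 - 0) ≥ 0 := by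
        rw [hh0, sub_zero, sub_zero]
        exact div_nonneg (hhnn _) (by positivity)
      calc (0:ℝ) ≤ (hh (rmin/2) - hh 0) / (rmin/2 - 0) := h2
        _ ≤ hh' (rmin/2) := by
            have e : (hh (rmin / 2) - hh 0) / (rmin / 2 - 0)
                = (hh (rmin / 2) - hh 0) / (rmin / 2 - 0) := rfl
            exact h1
    have hhgrow : ∀ τ : ℝ, 0 ≤ τ → lb / 2 * τ ^ 2 ≤ hh (rmin/2 + τ) := by
      intro τ hτ
      have hgrow := growth1D (f := fun s => hh (rmin/2 + s)) (f' := fun s => hh' (rmin/2 + s))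
        (f'' := fun s => hh'' (rmin/2 + s)) (T := τ) (μ := lb)
        (fun s => (hdh (rmin/2 + s)).comp_const_add (rmin/2) s)
        (fun s => (hdh' (rmin/2 + s)).comp_const_add (rmin/2) s)
        (by simpa using hslope)
        (fun s hs => hstrong (rmin/2 + s) (by linarith [hs.1]))
        (t := τ) ⟨hτ, le_refl τ⟩
      have hnn := hhnn (rmin/2 + 0)
      linarith
    -- second derivative bound near xstar
    have hQ : ∀ (v : EuclideanSpace ℝ (Fin n)), ‖v‖ ≤ 1 → ∀ s : ℝ, 0 ≤ s → s ≤ rfun xstar →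
        |fderiv ℝ (fderiv ℝ V) (xstar + s • v) v v - fderiv ℝ (fderiv ℝ V) xstar v v|
          ≤ mfun xstar / (2*K) := by
      intro v hv s hs0 hs1
      have hdist : dist (xstar + s • v) xstar ≤ rfun xstar := by
        rw [dist_eq_norm]
        have e : xstar + s • v - xstar = s • v := by abel
        rw [e, norm_smul, Real.norm_eq_abs, abs_of_nonneg hs0]
        calc s * ‖v‖ ≤ s * 1 := mul_le_mul_of_nonneg_left hv hs0
          _ = s := mul_one s
          _ ≤ rfun xstar := hs1
      have hB := hrx _ hdist
      set D : EuclideanSpace ℝ (Fin n) →L[ℝ] EuclideanSpace ℝ (Fin n) →L[ℝ] ℝ :=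
        fderiv ℝ (fderiv ℝ V) (xstar + s • v) - fderiv ℝ (fderiv ℝ V) xstar with hDdef
      have h1 : fderiv ℝ (fderiv ℝ V) (xstar + s • v) v v - fderiv ℝ (fderiv ℝ V) xstar v v
          = D v v := by
        rw [hDdef]
        simp [ContinuousLinearMap.sub_apply]
      rw [h1]
      have h2 : |D v v| ≤ ‖D‖ * ‖v‖ * ‖v‖ := by
        calc |D v v| = ‖D v v‖ := (Real.norm_eq_abs _).symm
          _ ≤ ‖D v‖ * ‖v‖ := (D v).le_opNorm v
          _ ≤ (‖D‖ * ‖v‖) * ‖v‖ := by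
              apply mul_le_mul_of_nonneg_right _ (norm_nonneg v)
              exact D.le_opNorm v
      have h4 : ‖v‖ * ‖v‖ ≤ 1 := mul_le_one₀ hv (norm_nonneg v) hv
      have h3 : ‖D‖ * ‖v‖ * ‖v‖ ≤ ‖D‖ := by
        calc ‖D‖ * ‖v‖ * ‖v‖ = ‖D‖ * (‖v‖ * ‖v‖) := by ring
          _ ≤ ‖D‖ * 1 := mul_le_mul_of_nonneg_left h4 (norm_nonneg D)
          _ = ‖D‖ := mul_one _
      linarith
    -- base second derivative value
    have b3 : fderiv ℝ (fderiv ℝ V) xstar (cc • u) (cc • u)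
        = cc ^ 2 * lam ⟨0, by omega⟩ xstar := by
      simp only [map_smul, ContinuousLinearMap.smul_apply, smul_eq_mul]
      rw [hess_inner_eq xstar u u, hequ, real_inner_smul_left, real_inner_self_eq_norm_sq, hu]
      ring
    have hD2 := D2 α β hab w0 hw0
    rw [← hccdef, ← hw1def] at hD2
    have hIneq : ∀ s ∈ Set.Icc (0:ℝ) (rfun xstar), 0 ≤ Ψ'' s := by
      intro s hs
      have h1 := hQ w0 (le_of_eq hw0) s hs.1 hs.2
      have h2 := hQ w1 hw1norm s hs.1 hs.2
      have h3 := hQ (cc • u) hcu s hs.1 hs.2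
      have e1 : fderiv ℝ (fderiv ℝ V) xstar w0 w0 = ⟪hess V xstar w0, w0⟫ :=
        hess_inner_eq xstar w0 w0
      have e2 : fderiv ℝ (fderiv ℝ V) xstar w1 w1 = ⟪hess V xstar w1, w1⟫ :=
        hess_inner_eq xstar w1 w1
      have k1 := mul_ge_neg_abs (y := 1 - α) h1
      have k2 := mul_ge_neg_abs (y := α) h2
      have k3 := mul_ge_neg_abs (y := -β) h3
      have hKK : |1 - α| + |α| + |-β| ≤ K := by
        rw [hKdef, abs_neg]; linarith
      have hδnn : 0 ≤ mfun xstar / (2*K) := by positivity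
      have hK' : K ≠ 0 := ne_of_gt hK0
      have hhalf : K * (mfun xstar / (2*K)) = mfun xstar / 2 := by
        field_simp
      have base_ge : mfun xstar ≤ (1 - α) * (fderiv ℝ (fderiv ℝ V) xstar w0 w0)
          + α * (fderiv ℝ (fderiv ℝ V) xstar w1 w1)
          - β * (fderiv ℝ (fderiv ℝ V) xstar (cc • u) (cc • u)) := by
        rw [e1, e2, b3]
        linarith [hD2]
      have hKδ := mul_le_mul_of_nonneg_right hKK hδnn
      rw [hΨ''def]
      simp only
      linarith [k1, k2, k3, base_ge, hKδ, hhalf, hmpos]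
    have hΨgrow : ∀ τ, τ ∈ Set.Icc (0:ℝ) (rfun xstar) → Ψ 0 ≤ Ψ τ := by
      intro τ hτ
      have := growth1D hdΨ hdΨ' (le_of_eq hΨ'0.symm) hIneq hτ
      simpa using this
    -- Lipschitz lower bound
    have hLip : Ψ 0 - CL * t ≤ Ψ t := by
      have hnb : ∀ (v : EuclideanSpace ℝ (Fin n)), ‖v‖ ≤ 1 →
          |V (xstar + t • v) - V xstar| ≤ L * t := by
        intro v hv
        have h1 := hL (xstar + t • v) xstar
        have e : xstar + t • v - xstar = t • v := by abel
        rw [e, norm_smul, Real.norm_eq_abs, abs_of_pos ht] at h1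
        calc |V (xstar + t • v) - V xstar| ≤ L * (t * ‖v‖) := h1
          _ ≤ L * (t * 1) := by
              apply mul_le_mul_of_nonneg_left _ hL0
              exact mul_le_mul_of_nonneg_left hv (le_of_lt ht)
          _ = L * t := by ring
      have q1 := mul_ge_neg_abs (y := 1 - α) (hnb w0 (le_of_eq hw0))
      have q2 := mul_ge_neg_abs (y := α) (hnb w1 hw1norm)
      have q3 := mul_ge_neg_abs (y := -β) (hnb (cc • u) hcu)
      have e0 : Ψ 0 = (1 - α) * V xstar + α * V xstar - β * V xstar := by
        simp [hΨdef]
      have et : Ψ t = (1 - α) * V (xstar + t • w0) + α * V (xstar + t • w1)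
          - β * V (xstar + t • (cc • u)) := by
        simp only [hΨdef]
      rw [e0, et]
      have hCL : (|1 - α| + |α| + |-β|) * (L * t) ≤ CL * t := by
        rw [hCLdef, abs_neg]
        linarith [ht.le]
      linarith [q1, q2, q3, hCL]
    -- conclude
    rcases le_or_gt t (rfun xstar) with hcase | hcase
    · rw [hW0, hWt]
      have h1 := hΨgrow t ⟨le_of_lt ht, hcase⟩
      have h2 : 0 ≤ ρ * p xstar y := mul_nonneg (le_of_lt hρ0) (hpNonneg _ _)
      linarith
    · rw [hW0, hWt]
      have hrmt : rmin ≤ t := le_trans hrle (le_of_lt hcase)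
      have hpy : lb/2 * (t - rmin/2) ^ 2 ≤ p xstar y := by
        have h1 := hhgrow (t - rmin/2) (by linarith)
        have harg : rmin/2 + (t - rmin/2) = t := by ring
        rw [harg] at h1
        have h2 : hh t = p xstar y := by
          rw [hhdef]
          simp only
          rw [← hy]
        linarith [h1, le_of_eq h2]
      have hquad : lb/8 * t ^ 2 ≤ lb/2 * (t - rmin/2) ^ 2 := by
        have h1 : t/2 ≤ t - rmin/2 := by linarith
        have h2 : (t/2) ^ 2 ≤ (t - rmin/2) ^ 2 := by
          apply pow_le_pow_left₀ (by positivity) h1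
        have h3 := mul_le_mul_of_nonneg_left h2 (le_of_lt (by positivity : (0:ℝ) < lb/2))
        linarith [h3]
      have hfar : CL * t ≤ ρ * (lb/8 * t ^ 2) := by
        have e1 : 0 < lb * rmin := by positivity
        have h3 : 8 * CL ≤ ρ * (lb * rmin) := by
          have h4 := mul_le_mul_of_nonneg_right (le_of_lt hρ) (le_of_lt e1)
          have h5 : 8 * CL / (lb * rmin) * (lb * rmin) = 8 * CL :=
            div_mul_cancel₀ _ (ne_of_gt e1)
          nlinarith [h4, h5, e1]
        have m1 : (8 * CL) * t ≤ (ρ * (lb * rmin)) * t :=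
          mul_le_mul_of_nonneg_right h3 ht.le
        have m2 : (ρ * lb) * (rmin * t) ≤ (ρ * lb) * (t * t) :=
          mul_le_mul_of_nonneg_left (mul_le_mul_of_nonneg_right hrmt ht.le)
            (le_of_lt (mul_pos hρ0 hlb_pos))
        nlinarith [m1, m2]
      have hmono1 : ρ * (lb/2 * (t - rmin/2) ^ 2) ≤ ρ * p xstar y :=
        mul_le_mul_of_nonneg_left hpy (le_of_lt hρ0)
      have hmono2 : ρ * (lb/8 * t ^ 2) ≤ ρ * (lb/2 * (t - rmin/2) ^ 2) :=
        mul_le_mul_of_nonneg_left hquad (le_of_lt hρ0)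
      have c1 : CL * t ≤ ρ * p xstar y := le_trans hfar (le_trans hmono2 hmono1)
      linarith [hLip, c1]
  · -- part (ii)
    intro x
    simp only [sub_self, norm_zero]
    norm_num
  · -- part (iii)
    intro v hv
    have e1 : ⟪hess V xstar u, u⟫ = lam ⟨0, by omega⟩ xstar := by
      rw [hequ, real_inner_smul_left, real_inner_self_eq_norm_sq, hu]
      norm_num
    have h1 := D1 v
    rw [hv, one_pow, mul_one] at h1
    rw [e1]
    exact h1
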